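/- Let n ≥ 1, let (h_{k,ℓ})_{0≤ℓ<k≤n+1} be a non-decreasing triangular array of reals (meaning h_{k,ℓ} ≤ h_{k',ℓ'} whenever k ≤ k' and ℓ ≤ ℓ'), and let h ≥ h_{n+1,n}. Then the second order branching clustering function Φ on 𝕃₀⁽ⁿ⁾ with parameters (h_{k,ℓ}) and h is a monotone clustering function: A ≺ B implies Φ(A) ≤ Φ(B) for all A,B ⊆ 𝕃₀⁽ⁿ⁾ with |A| = |B|, and Φ(A∪B) ≤ Φ(A) + Φ(B) for all disjoint A,B ⊆ 𝕃₀⁽ⁿ⁾. -/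

import Mathlib

/-!
Cut the tree of depth `n + 1` at the root into two trees of depth `n`, and let `Ψ = Φ - h` on
nonempty sets, `Ψ(∅) = 0`. If `A` meets both subtrees, the root is its oldest branching point and
`Ψ(A) = h_{n+2,n+1} + Ψ(A₀) + Ψ(A₁)`. If `A` lies in one subtree, `Ψ(A)` is the `Ψ` of that part
computed with row `n + 1` of the array replaced by row `n + 2`. Both properties then follow by
induction on the depth.

Subadditivity is proved in the stronger form `Ψ_W(E ∪ F) ≤ δ + Ψ_V(E) + Ψ_V(F)` for arrays
`V`, `W` that agree below their top row, where `V ≤ W ≤ δ`: this is the form that survives the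
passage to a single subtree. For monotonicity, a bijection `σ` with `|u ∧ v| ≤ |σ u ∧ σ v|` sends
leaves in different subtrees to different subtrees, so it descends to the parts; when `B` meets
both subtrees but `A` does not, `A` is cut according to where `σ` sends it, and the subadditivity
bound pays for the root of `B`.
-/

open Filter
open scoped Classical

noncomputable section

namespace PWC

/-- Leaves of the binary tree `𝕋⁽ⁿ⁾` of depth `n`: binary words of length `n`
(coordinate `0` is the first step away from the root). -/
abbrev Leaf (n : ℕ) := Fin n → Bool

/-- The age (distance from the leaves) of the youngest common ancestor `u ∧ v` of two
leaves: `n` minus the length of their longest common prefix. -/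
def meetAge {n : ℕ} (u v : Leaf n) : ℕ :=
  if u = v then 0 else n - sInf {i : ℕ | ∃ h : i < n, u ⟨i, h⟩ ≠ v ⟨i, h⟩}

/-- Canonical representative (as a leaf) of the ancestor of `u` at age `k`:
keep the first `n - k` coordinates and pad by `false`. -/
def trunc {n : ℕ} (k : ℕ) (u : Leaf n) : Leaf n :=
  fun i => if (i : ℕ) < n - k then u i else false

/-- The branching points `ℬ(A) ∩ 𝕃_k` of `A` of age `k`, encoded by the canonical
representatives of the corresponding ancestors. -/
def branchPts {n : ℕ} (A : Finset (Leaf n)) (k : ℕ) : Finset (Leaf n) :=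
  ((A ×ˢ A).filter (fun p => meetAge p.1 p.2 = k)).image (fun p => trunc k p.1)

/-- `b_k(A)`: the number of branching points of `A` of age `k`. -/
def bcount {n : ℕ} (A : Finset (Leaf n)) (k : ℕ) : ℕ := (branchPts A k).card

/-- `b_{k,ℓ}(A)`: the number of branching points of `A` of age `ℓ` whose direct
branching ancestor has age `k`; for `k = n+1` the indicator that the oldest branching
point of `A` has age `ℓ` (i.e. the branching points at age `ℓ` having no strictly older
branching ancestor). -/
def b2count {n : ℕ} (A : Finset (Leaf n)) (k l : ℕ) : ℕ :=
  if k = n + 1 then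
    ((branchPts A l).filter (fun w => ∀ j, l < j → j ≤ n → trunc j w ∉ branchPts A j)).card
  else
    ((branchPts A l).filter (fun w => trunc k w ∈ branchPts A k ∧
      ∀ j, l < j → j < k → trunc j w ∉ branchPts A j)).card

/-- `A ≺ B` : `A` is more clustered than `B`. -/
def MoreClustered {n : ℕ} (A B : Finset (Leaf n)) : Prop :=
  ∃ σ : Leaf n → Leaf n, Set.BijOn σ ↑A ↑B ∧
    ∀ u ∈ A, ∀ v ∈ A, meetAge u v ≤ meetAge (σ u) (σ v)

/-- `A ∼ B` : the subtrees of `𝕋⁽ⁿ⁾` generated by `A` and `B` are graph-isomorphic,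
i.e. there is a bijection of the leaf sets preserving all meet ages. -/
def EquivClustered {n : ℕ} (A B : Finset (Leaf n)) : Prop :=
  ∃ σ : Leaf n → Leaf n, Set.BijOn σ ↑A ↑B ∧
    ∀ u ∈ A, ∀ v ∈ A, meetAge (σ u) (σ v) = meetAge u v

/-- A clustering function: vanishes on `∅` and is invariant under isomorphism of the
generated subtrees. -/
def IsClusteringFn {n : ℕ} (Φ : Finset (Leaf n) → ℝ) : Prop :=
  Φ ∅ = 0 ∧ ∀ A B : Finset (Leaf n), EquivClustered A B → Φ A = Φ B

/-- A monotone clustering function. -/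
def IsMonotoneClusteringFn {n : ℕ} (Φ : Finset (Leaf n) → ℝ) : Prop :=
  IsClusteringFn Φ ∧
    (∀ A B : Finset (Leaf n), MoreClustered A B → Φ A ≤ Φ B) ∧
    (∀ A B : Finset (Leaf n), Disjoint A B → Φ (A ∪ B) ≤ Φ A + Φ B)

/-- The partition function `Z_n^{Φ,J}`. -/
def Z (n : ℕ) (Φ : Finset (Leaf n) → ℝ) (J : ℝ) : ℝ :=
  ∑ A : Finset (Leaf n), Real.exp (J * (A.card : ℝ) - Φ A)

/-- The finite-volume free energy `ζ_n^Φ(J) = 2⁻ⁿ ln Z_n^{Φ,J}`. -/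
def zetaN (n : ℕ) (Φ : Finset (Leaf n) → ℝ) (J : ℝ) : ℝ :=
  Real.log (Z n Φ J) / 2 ^ n

/-- The canonical partition function `W_n^Φ(a₀)`. -/
def W (n : ℕ) (Φ : Finset (Leaf n) → ℝ) (a₀ : ℕ) : ℝ :=
  ∑ A ∈ Finset.univ.filter (fun A : Finset (Leaf n) => A.card = a₀), Real.exp (-Φ A)

/-- The finite-volume canonical free energy `ω_n^Φ(ε) = 2⁻ⁿ ln W_n^Φ(ε 2ⁿ)` (for a
dyadic `ε ∈ [0,1]` and `n` large, `⌊ε 2ⁿ⌋ = ε 2ⁿ`). -/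
def omegaN (n : ℕ) (Φ : Finset (Leaf n) → ℝ) (ε : ℝ) : ℝ :=
  Real.log (W n Φ ⌊ε * 2 ^ n⌋₊) / 2 ^ n

/-- The expected density `ρ_n^Φ(J)` of the dry set under the PWC measure. -/
def rhoN (n : ℕ) (Φ : Finset (Leaf n) → ℝ) (J : ℝ) : ℝ :=
  (∑ A : Finset (Leaf n), (A.card : ℝ) * Real.exp (J * (A.card : ℝ) - Φ A)) /
    (2 ^ n * Z n Φ J)

/-- A dyadic rational. -/
def IsDyadic (x : ℝ) : Prop := ∃ (k : ℤ) (m : ℕ), x = (k : ℝ) / 2 ^ m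

/-- The hypotheses of the general theory (Proposition 1.2): each `Φ_n` (for `n ≥ 1`) is
a monotone, non-negative clustering function, and `Φ_n(A) ≤ Φ_{n-1}(A) + γ_n` for any
`A` contained in the leaf set of one of the two subtrees of `𝕋⁽ⁿ⁾` rooted at a child of
the root (identified with `𝕋⁽ⁿ⁻¹⁾` by prepending the corresponding letter), where
`γ_n ≥ 0` and `∑ γ_n 2⁻ⁿ < ∞`. -/
structure GoodSeq (Φ : ∀ n, Finset (Fin n → Bool) → ℝ) (γ : ℕ → ℝ) : Prop where
  mono : ∀ n, 1 ≤ n → IsMonotoneClusteringFn (Φ n)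
  nonneg : ∀ n, 1 ≤ n → ∀ A, 0 ≤ Φ n A
  gamma_nonneg : ∀ n, 0 ≤ γ n
  gamma_summable : Summable fun n => γ n / 2 ^ n
  subtree : ∀ (n : ℕ) (b : Bool) (A : Finset (Fin n → Bool)),
    Φ (n + 1) (A.image fun u => Fin.cons b u) ≤ Φ n A + γ (n + 1)

/-- The first order branching clustering function with parameters `(h_k)_{k=0}^n`, `h`. -/
def foPhi (n : ℕ) (hs : ℕ → ℝ) (h : ℝ) (A : Finset (Leaf n)) : ℝ :=
  if A = ∅ then 0 else (∑ k ∈ Finset.range (n + 1), hs k * (bcount A k : ℝ)) + h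

/-- The second order branching clustering function with parameters
`(h_{k,ℓ})_{0 ≤ ℓ < k ≤ n+1}`, `h`. -/
def soPhi (n : ℕ) (H : ℕ → ℕ → ℝ) (h : ℝ) (A : Finset (Leaf n)) : ℝ :=
  if A = ∅ then 0
  else (∑ k ∈ Finset.range (n + 2), ∑ l ∈ Finset.range k, H k l * (b2count A k l : ℝ)) + h

/-- A non-decreasing (infinite) triangular array. -/
def ArrayMono (H : ℕ → ℕ → ℝ) : Prop :=
  ∀ k k' l l' : ℕ, l < k → l' < k' → k ≤ k' → l ≤ l' → H k l ≤ H k' l'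

/-- The Dirichlet energy on `𝕋⁽ⁿ⁾` of `f` (vertices encoded as words of length `≤ n`,
read from the root; a vertex of length `m` has age `n - m` and its parent edge has
conductance `C (n - m)`). -/
def energy (n : ℕ) (C : ℕ → ℝ) (f : List Bool → ℝ) : ℝ :=
  ∑ m ∈ Finset.Icc 1 n, ∑ v : Fin m → Bool,
    C (n - m) * (f (List.ofFn v) - f (List.ofFn v).dropLast) ^ 2

/-- The capacity of a set of leaves `A ⊆ 𝕃₀⁽ⁿ⁾`. -/
def cap (n : ℕ) (C : ℕ → ℝ) (A : Finset (Leaf n)) : ℝ :=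
  sInf {x : ℝ | ∃ f : List Bool → ℝ, f [] = 1 ∧ (∀ u ∈ A, f (List.ofFn u) = 0) ∧
    x = energy n C f}

open Finset

section Leaves

variable {n : ℕ}

lemma meetAge_le_iff (u v : Leaf n) (k : ℕ) :
    meetAge u v ≤ k ↔ ∀ i : Fin n, (i : ℕ) < n - k → u i = v i := by
  unfold meetAge
  split_ifs with huv
  · simp [huv]
  · have hne : {i : ℕ | ∃ h : i < n, u ⟨i, h⟩ ≠ v ⟨i, h⟩}.Nonempty := by
      obtain ⟨i, hi⟩ := Function.ne_iff.1 huv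
      exact ⟨i, i.isLt, hi⟩
    rw [tsub_le_iff_right, ← tsub_le_iff_left, le_csInf_iff' hne]
    constructor
    · intro h i hi
      by_contra hne
      exact absurd (h ⟨i.isLt, hne⟩) (by omega)
    · rintro h i ⟨hi, hne⟩
      by_contra hlt
      exact hne (h ⟨i, hi⟩ (show i < n - k by omega))

lemma meetAge_le (u v : Leaf n) : meetAge u v ≤ n :=
  (meetAge_le_iff u v n).2 fun i hi => by omega

lemma meetAge_le_iff_head_eq {u v : Leaf (n + 1)} : meetAge u v ≤ n ↔ u 0 = v 0 := by
  rw [meetAge_le_iff]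
  refine ⟨fun h => h 0 (by simp), fun h i hi => ?_⟩
  obtain rfl : i = 0 := Fin.ext (by rw [Fin.val_zero]; omega)
  exact h

lemma meetAge_of_head_ne {u v : Leaf (n + 1)} (h : u 0 ≠ v 0) : meetAge u v = n + 1 :=
  le_antisymm (meetAge_le u v) (not_le.1 (mt meetAge_le_iff_head_eq.1 h))

lemma meetAge_of_head_eq {u v : Leaf (n + 1)} (h : u 0 = v 0) :
    meetAge u v = meetAge (Fin.tail u) (Fin.tail v) := by
  refine eq_of_forall_ge_iff fun k => ?_
  rw [meetAge_le_iff, meetAge_le_iff, Fin.forall_fin_succ]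
  simp only [Fin.val_zero, Fin.val_succ, Fin.tail, h, implies_true, true_and]
  exact forall_congr' fun i => imp_congr_left (by omega)

lemma meetAge_cons (b : Bool) (u v : Leaf n) :
    meetAge (Fin.cons b u : Leaf (n + 1)) (Fin.cons b v) = meetAge u v := by
  rw [meetAge_of_head_eq (u := Fin.cons b u) (v := Fin.cons b v) rfl, Fin.tail_cons, Fin.tail_cons]

lemma trunc_cons {k : ℕ} (hk : k ≤ n) (b : Bool) (u : Leaf n) :
    trunc k (Fin.cons b u : Leaf (n + 1)) = Fin.cons b (trunc k u) := by
  funext i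
  refine Fin.cases ?_ (fun j => ?_) i
  · simp only [trunc, Fin.val_zero, Fin.cons_zero, if_pos (show 0 < n + 1 - k by omega)]
  · simp only [trunc, Fin.cons_succ, Fin.val_succ,
      show (j : ℕ) + 1 < n + 1 - k ↔ (j : ℕ) < n - k by omega]

lemma trunc_of_le {k : ℕ} (hk : n ≤ k) (u : Leaf n) : trunc k u = fun _ => false := by
  funext i
  simp [trunc, show n - k = 0 by omega]

lemma mem_branchPts {k : ℕ} {A : Finset (Leaf n)} {w : Leaf n} :
    w ∈ branchPts A k ↔ ∃ u ∈ A, ∃ v ∈ A, meetAge u v = k ∧ trunc k u = w := by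
  simp [branchPts, and_assoc]

lemma branchPts_empty {k : ℕ} : branchPts (∅ : Finset (Leaf n)) k = ∅ := by
  simp [branchPts]

def NoBranchBetween (A : Finset (Leaf n)) (l k : ℕ) (w : Leaf n) : Prop :=
  ∀ j, l < j → j < k → trunc j w ∉ branchPts A j

lemma b2count_eq (A : Finset (Leaf n)) (k l : ℕ) :
    b2count A k l = #((branchPts A l).filter fun w =>
      (k = n + 1 ∨ trunc k w ∈ branchPts A k) ∧ NoBranchBetween A l k w) := by
  unfold b2count NoBranchBetween
  split_ifs with hk
  · subst hk
    simp
  · simp [hk]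

lemma noBranchBetween_succ {k l : ℕ} {A : Finset (Leaf n)} {w : Leaf n}
    (h : trunc k w ∉ branchPts A k) :
    NoBranchBetween A l (k + 1) w ↔ NoBranchBetween A l k w :=
  forall_congr' fun j => imp_congr_right fun _ =>
    ⟨fun H hj => H (by omega), fun H hj => (Nat.lt_succ_iff_lt_or_eq.1 hj).elim H (· ▸ h)⟩

end Leaves

section Sides

variable {n : ℕ} {b : Bool} {A B : Finset (Leaf (n + 1))}

def side (b : Bool) (A : Finset (Leaf (n + 1))) : Finset (Leaf n) :=
  A.preimage (Fin.cons (α := fun _ => Bool) b) (Fin.cons_right_injective _).injOn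

@[simp] lemma mem_side {x : Leaf n} : x ∈ side b A ↔ (Fin.cons b x : Leaf (n + 1)) ∈ A :=
  mem_preimage

@[simp] lemma side_union : side b (A ∪ B) = side b A ∪ side b B := by
  ext; simp

lemma disjoint_side (h : Disjoint A B) : Disjoint (side b A) (side b B) :=
  disjoint_left.2 fun _ hA hB => disjoint_left.1 h (mem_side.1 hA) (mem_side.1 hB)

lemma side_filter (P : Leaf (n + 1) → Prop) [DecidablePred P] :
    side b (A.filter P) = (side b A).filter fun x => P (Fin.cons b x) := by
  ext; simp

lemma card_side_add_card_side (A : Finset (Leaf (n + 1))) :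
    #(side false A) + #(side true A) = #A := by
  have hcard (b : Bool) : #(side b A) = #(A.filter fun u => u 0 = b) := by
    rw [side, card_preimage]
    congr 1
    refine filter_congr fun u _ => ⟨?_, fun h => ⟨Fin.tail u, ?_⟩⟩
    · rintro ⟨x, rfl⟩
      rfl
    · rw [← h, Fin.cons_self_tail]
  rw [hcard, hcard, ← card_filter_add_card_filter_not (s := A) (fun u => u 0 = false)]
  simp

lemma side_not_eq_empty_iff : side (!b) A = ∅ ↔ ∀ u ∈ A, u 0 = b := by
  refine ⟨fun h u hu => ?_, fun hA => eq_empty_of_forall_notMem fun x hx => ?_⟩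
  · by_contra hb
    rw [← Fin.cons_self_tail u, Bool.eq_not_iff.2 hb, ← mem_side, h] at hu
    simp at hu
  · simpa using hA _ (mem_side.1 hx)

lemma side_nonempty (hA : ∀ u ∈ A, u 0 = b) (hne : A.Nonempty) : (side b A).Nonempty := by
  obtain ⟨u, hu⟩ := hne
  exact ⟨Fin.tail u, by rwa [mem_side, ← hA u hu, Fin.cons_self_tail]⟩

lemma forall_head_eq_or_sides_nonempty (A : Finset (Leaf (n + 1))) :
    (∃ b, ∀ u ∈ A, u 0 = b) ∨ ∀ b, (side b A).Nonempty := by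
  rcases (side true A).eq_empty_or_nonempty with h₁ | h₁
  · exact .inl ⟨false, side_not_eq_empty_iff.1 h₁⟩
  rcases (side false A).eq_empty_or_nonempty with h₀ | h₀
  · exact .inl ⟨true, side_not_eq_empty_iff.1 h₀⟩
  exact .inr fun b => by cases b <;> assumption

lemma side_branchPts {k : ℕ} (hk : k ≤ n) (b : Bool) (A : Finset (Leaf (n + 1))) :
    side b (branchPts A k) = branchPts (side b A) k := by
  ext x
  simp only [mem_side, mem_branchPts]
  constructor
  · rintro ⟨u, hu, v, hv, huv, hx⟩
    cases u using Fin.consCases with | cons a u => ?_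
    cases v using Fin.consCases with | cons c v => ?_
    obtain rfl : a = c := by simpa using meetAge_le_iff_head_eq.1 (huv.le.trans hk)
    rw [trunc_cons hk, Fin.cons_inj] at hx
    obtain ⟨rfl, rfl⟩ := hx
    exact ⟨_, hu, _, hv, by rwa [meetAge_cons] at huv, rfl⟩
  · rintro ⟨u, hu, v, hv, rfl, rfl⟩
    exact ⟨_, hu, _, hv, meetAge_cons b u v, trunc_cons hk b u⟩

lemma branchPts_root_eq_empty (hA : ∀ u ∈ A, u 0 = b) : branchPts A (n + 1) = ∅ :=
  eq_empty_of_forall_notMem fun _ hw => by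
    obtain ⟨u, hu, v, hv, huv, -⟩ := mem_branchPts.1 hw
    exact absurd (meetAge_le_iff_head_eq.2 ((hA u hu).trans (hA v hv).symm)) (by omega)

lemma branchPts_root_nonempty (h : (side b A).Nonempty) (h' : (side (!b) A).Nonempty) :
    (branchPts A (n + 1)).Nonempty := by
  obtain ⟨x, hx⟩ := h
  obtain ⟨y, hy⟩ := h'
  exact ⟨_, mem_branchPts.2 ⟨_, mem_side.1 hx, _, mem_side.1 hy,
    meetAge_of_head_ne (by simp), rfl⟩⟩

lemma trunc_root_mem_branchPts (h : (branchPts A (n + 1)).Nonempty) (w : Leaf (n + 1)) :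
    trunc (n + 1) w ∈ branchPts A (n + 1) := by
  obtain ⟨z, hz⟩ := h
  obtain ⟨u, -, -, -, -, rfl⟩ := mem_branchPts.1 hz
  rwa [trunc_of_le le_rfl] at hz ⊢

lemma branchPts_root_eq_singleton (h : (branchPts A (n + 1)).Nonempty) :
    branchPts A (n + 1) = {fun _ => false} :=
  eq_singleton_iff_unique_mem.2
    ⟨trunc_of_le le_rfl (0 : Leaf (n + 1)) ▸ trunc_root_mem_branchPts h 0, fun _ hw => by
      obtain ⟨u, -, -, -, -, rfl⟩ := mem_branchPts.1 hw
      exact trunc_of_le le_rfl u⟩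

lemma noBranchBetween_cons {k l : ℕ} (hk : k ≤ n + 1) (x : Leaf n) :
    NoBranchBetween A l k (Fin.cons b x) ↔ NoBranchBetween (side b A) l k x :=
  forall_congr' fun j => imp_congr_right fun _ => imp_congr_right fun hj => not_congr <| by
    rw [trunc_cons (by omega), ← mem_side, side_branchPts (by omega)]

lemma card_filter_branchPts_succ {l : ℕ} (hl : l ≤ n) (A : Finset (Leaf (n + 1)))
    (P : Leaf (n + 1) → Prop) [DecidablePred P] :
    #((branchPts A l).filter P) =
      #((branchPts (side false A) l).filter fun x => P (Fin.cons false x)) +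
        #((branchPts (side true A) l).filter fun x => P (Fin.cons true x)) := by
  rw [← card_side_add_card_side, side_filter, side_filter, side_branchPts hl, side_branchPts hl]

lemma b2count_succ_of_le {k l : ℕ} (hk : k ≤ n) (hl : l ≤ n) (A : Finset (Leaf (n + 1))) :
    b2count A k l = b2count (side false A) k l + b2count (side true A) k l := by
  rw [b2count_eq, b2count_eq, b2count_eq, card_filter_branchPts_succ hl]
  congr 1 <;> congr 1 <;> refine filter_congr fun x _ => ?_ <;>
  simp only [trunc_cons hk, ← mem_side, side_branchPts hk,
    noBranchBetween_cons (by omega : k ≤ n + 1), show k ≠ n + 1 + 1 by omega,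
    show k ≠ n + 1 by omega, false_or]

lemma b2count_root_of_nonempty (h : (branchPts A (n + 1)).Nonempty) {l : ℕ} (hl : l ≤ n) :
    b2count A (n + 1) l = b2count (side false A) (n + 1) l + b2count (side true A) (n + 1) l := by
  rw [b2count_eq, b2count_eq, b2count_eq, card_filter_branchPts_succ hl]
  congr 1 <;> congr 1 <;> refine filter_congr fun x _ => ?_ <;>
  simp only [trunc_root_mem_branchPts h, noBranchBetween_cons le_rfl, or_true, true_or]

lemma b2count_root_of_empty (h : branchPts A (n + 1) = ∅) (l : ℕ) : b2count A (n + 1) l = 0 := by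
  simp [b2count_eq, h]

lemma b2count_oldest_of_empty (h : branchPts A (n + 1) = ∅) {l : ℕ} (hl : l ≤ n) :
    b2count A (n + 2) l = b2count (side false A) (n + 1) l + b2count (side true A) (n + 1) l := by
  rw [b2count_eq, b2count_eq, b2count_eq, card_filter_branchPts_succ hl]
  congr 1 <;> congr 1 <;> refine filter_congr fun x _ => ?_ <;>
  simp only [noBranchBetween_succ (by simp [h] : trunc (n + 1) _ ∉ branchPts A (n + 1)),
    noBranchBetween_cons le_rfl, true_or]

lemma b2count_oldest_root_of_empty (h : branchPts A (n + 1) = ∅) :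
    b2count A (n + 2) (n + 1) = 0 := by
  simp [b2count_eq, h]

lemma b2count_oldest_root_of_nonempty (h : (branchPts A (n + 1)).Nonempty) :
    b2count A (n + 2) (n + 1) = 1 := by
  rw [b2count_eq, filter_true_of_mem fun w _ => ⟨.inl rfl, fun j hj hj' => by omega⟩,
    branchPts_root_eq_singleton h, card_singleton]

lemma b2count_oldest_of_nonempty (h : (branchPts A (n + 1)).Nonempty) {l : ℕ} (hl : l ≤ n) :
    b2count A (n + 2) l = 0 := by
  rw [b2count_eq, card_eq_zero, filter_eq_empty_iff]
  exact fun w _ ⟨_, hw⟩ => hw (n + 1) (by omega) (by omega) (trunc_root_mem_branchPts h w)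

end Sides

def branchSum (n : ℕ) (G : ℕ → ℕ → ℝ) (A : Finset (Leaf n)) : ℝ :=
  ∑ k ∈ range (n + 2), ∑ l ∈ range k, G k l * b2count A k l

lemma soPhi_of_nonempty {n : ℕ} {A : Finset (Leaf n)} (hA : A.Nonempty) (G : ℕ → ℕ → ℝ) (h : ℝ) :
    soPhi n G h A = branchSum n G A + h := by
  simp [soPhi, hA.ne_empty, branchSum]

@[simp] lemma branchSum_empty (n : ℕ) (G : ℕ → ℕ → ℝ) : branchSum n G ∅ = 0 := by
  simp [branchSum, b2count_eq, branchPts_empty]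

/-- If `A` lies below one child of the root, its oldest branching point is counted in row `n + 2`
for the tree of depth `n + 1`, but in row `n + 1` for that subtree. -/
def subtreeParams (n : ℕ) (G : ℕ → ℕ → ℝ) : ℕ → ℕ → ℝ :=
  fun k l => if k = n + 1 then G (n + 2) l else G k l

section Recursion

variable {n : ℕ} {A : Finset (Leaf (n + 1))} (G : ℕ → ℕ → ℝ)

lemma branchSum_succ_of_branchPts_eq_empty (h : branchPts A (n + 1) = ∅) :
    branchSum (n + 1) G A = branchSum n (subtreeParams n G) (side false A) +
      branchSum n (subtreeParams n G) (side true A) := by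
  have low : ∀ k ∈ range (n + 1), ∑ l ∈ range k, G k l * b2count A k l =
      ∑ l ∈ range k, subtreeParams n G k l * b2count (side false A) k l +
        ∑ l ∈ range k, subtreeParams n G k l * b2count (side true A) k l := by
    intro k hk
    rw [← sum_add_distrib]
    refine sum_congr rfl fun l hl => ?_
    simp only [mem_range] at hk hl
    rw [b2count_succ_of_le (by omega) (by omega), subtreeParams, if_neg (by omega)]
    push_cast
    ring
  have oldest : ∑ l ∈ range (n + 2), G (n + 2) l * b2count A (n + 2) l =
      ∑ l ∈ range (n + 1), subtreeParams n G (n + 1) l * b2count (side false A) (n + 1) l +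
        ∑ l ∈ range (n + 1), subtreeParams n G (n + 1) l * b2count (side true A) (n + 1) l := by
    rw [sum_range_succ, b2count_oldest_root_of_empty h, ← sum_add_distrib]
    simp only [Nat.cast_zero, mul_zero, add_zero]
    refine sum_congr rfl fun l hl => ?_
    rw [b2count_oldest_of_empty h (by simpa [Nat.lt_succ_iff] using hl), subtreeParams, if_pos rfl]
    push_cast
    ring
  rw [branchSum, sum_range_succ, sum_range_succ, oldest, sum_congr rfl low, sum_add_distrib,
    branchSum, branchSum, sum_range_succ _ (n + 1), sum_range_succ _ (n + 1)]
  simp only [b2count_root_of_empty h, Nat.cast_zero, mul_zero, sum_const_zero, add_zero]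
  ring

lemma branchSum_succ_of_branchPts_nonempty (h : (branchPts A (n + 1)).Nonempty) :
    branchSum (n + 1) G A =
      G (n + 2) (n + 1) + branchSum n G (side false A) + branchSum n G (side true A) := by
  have low : ∀ k ∈ range (n + 2), ∑ l ∈ range k, G k l * b2count A k l =
      ∑ l ∈ range k, G k l * b2count (side false A) k l +
        ∑ l ∈ range k, G k l * b2count (side true A) k l := by
    intro k hk
    rw [← sum_add_distrib]
    refine sum_congr rfl fun l hl => ?_
    simp only [mem_range] at hk hl
    rcases Nat.lt_succ_iff_lt_or_eq.1 hk with hk | rfl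
    · rw [b2count_succ_of_le (by omega) (by omega)]
      push_cast
      ring
    · rw [b2count_root_of_nonempty h (by omega)]
      push_cast
      ring
  have oldest : ∑ l ∈ range (n + 2), G (n + 2) l * b2count A (n + 2) l = G (n + 2) (n + 1) := by
    rw [sum_range_succ, b2count_oldest_root_of_nonempty h, sum_eq_zero fun l hl => by
      rw [b2count_oldest_of_nonempty h (by simpa [Nat.lt_succ_iff] using hl)]; simp]
    simp
  rw [branchSum, sum_range_succ, oldest, sum_congr rfl low, sum_add_distrib, branchSum, branchSum]
  ring

lemma branchSum_succ_of_forall_head_eq {b : Bool} (hA : ∀ u ∈ A, u 0 = b) :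
    branchSum (n + 1) G A = branchSum n (subtreeParams n G) (side b A) := by
  have hnb := side_not_eq_empty_iff.2 hA
  rw [branchSum_succ_of_branchPts_eq_empty G (branchPts_root_eq_empty hA)]
  cases b <;> simp_all

lemma branchSum_succ_of_sides_nonempty {b : Bool} (h : (side b A).Nonempty)
    (h' : (side (!b) A).Nonempty) :
    branchSum (n + 1) G A =
      G (n + 2) (n + 1) + branchSum n G (side b A) + branchSum n G (side (!b) A) := by
  rw [branchSum_succ_of_branchPts_nonempty G (branchPts_root_nonempty h h')]
  cases b
  · rfl
  · rw [Bool.not_true]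
    ring

end Recursion

def ArrayMonoUpTo (N : ℕ) (G : ℕ → ℕ → ℝ) : Prop :=
  ∀ k k' l l' : ℕ, l < k → l' < k' → k ≤ k' → k' ≤ N → l ≤ l' → G k l ≤ G k' l'

lemma ArrayMonoUpTo.mono {M N : ℕ} {G : ℕ → ℕ → ℝ} (hG : ArrayMonoUpTo N G) (hMN : M ≤ N) :
    ArrayMonoUpTo M G :=
  fun k k' l l' h₁ h₂ h₃ h₄ h₅ => hG k k' l l' h₁ h₂ h₃ (h₄.trans hMN) h₅

lemma ArrayMonoUpTo.subtreeParams {n : ℕ} {G : ℕ → ℕ → ℝ} (hG : ArrayMonoUpTo (n + 2) G) :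
    ArrayMonoUpTo (n + 1) (subtreeParams n G) := by
  intro k k' l l' h₁ h₂ h₃ h₄ h₅
  unfold PWC.subtreeParams
  split_ifs <;> exact hG _ _ l l' (by omega) (by omega) (by omega) (by omega) h₅

lemma branchSum_le_branchSum {n : ℕ} {G G' : ℕ → ℕ → ℝ}
    (hG : ∀ k l, l < k → k ≤ n + 1 → G k l ≤ G' k l) (A : Finset (Leaf n)) :
    branchSum n G A ≤ branchSum n G' A :=
  sum_le_sum fun k hk => sum_le_sum fun l hl => mul_le_mul_of_nonneg_right
    (hG k l (mem_range.1 hl) (Nat.lt_succ_iff.1 (mem_range.1 hk))) (Nat.cast_nonneg _)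

lemma branchSum_congr {n : ℕ} {G G' : ℕ → ℕ → ℝ}
    (hG : ∀ k l, l < k → k ≤ n + 1 → G k l = G' k l) (A : Finset (Leaf n)) :
    branchSum n G A = branchSum n G' A :=
  (branchSum_le_branchSum (fun k l h₁ h₂ => (hG k l h₁ h₂).le) A).antisymm
    (branchSum_le_branchSum (fun k l h₁ h₂ => (hG k l h₁ h₂).ge) A)

lemma branchSum_le_subtreeParams {n : ℕ} {G : ℕ → ℕ → ℝ} (hG : ArrayMonoUpTo (n + 2) G)
    (A : Finset (Leaf n)) : branchSum n G A ≤ branchSum n (subtreeParams n G) A :=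
  branchSum_le_branchSum (fun k l h₁ h₂ => by
    unfold PWC.subtreeParams
    split_ifs
    · exact hG _ _ l l (by omega) (by omega) (by omega) le_rfl le_rfl
    · exact le_rfl) A

def UnionBound (m : ℕ) (V W : ℕ → ℕ → ℝ) (δ : ℝ) : Prop :=
  ∀ E F : Finset (Leaf m), Disjoint E F → E.Nonempty → F.Nonempty →
    branchSum m W (E ∪ F) ≤ δ + branchSum m V E + branchSum m V F

section UnionBound

variable {m : ℕ} {V W : ℕ → ℕ → ℝ} {δ : ℝ} {b : Bool} {E F : Finset (Leaf (m + 1))}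

lemma branchSum_union_le_of_opposite_sides
    (hWV : ∀ X : Finset (Leaf m), branchSum m W X = branchSum m V X)
    (hV : ArrayMonoUpTo (m + 2) V) (hδ : W (m + 2) (m + 1) ≤ δ)
    (hEb : ∀ u ∈ E, u 0 = b) (hFb : ∀ u ∈ F, u 0 = !b) (hE : E.Nonempty) (hF : F.Nonempty) :
    branchSum (m + 1) W (E ∪ F) ≤ δ + branchSum (m + 1) V E + branchSum (m + 1) V F := by
  have hE' : side (!b) E = ∅ := side_not_eq_empty_iff.2 hEb
  have hF' : side b F = ∅ := by simpa using side_not_eq_empty_iff.2 hFb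
  rw [branchSum_succ_of_sides_nonempty W (b := b) (by simpa [hF'] using side_nonempty hEb hE)
      (by simpa [hE'] using side_nonempty hFb hF),
    branchSum_succ_of_forall_head_eq V hEb, branchSum_succ_of_forall_head_eq V hFb]
  simp only [side_union, hE', hF', union_empty, empty_union, hWV]
  linarith [branchSum_le_subtreeParams hV (side b E), branchSum_le_subtreeParams hV (side (!b) F)]

lemma branchSum_union_le_of_forall_head_eq_of_sides_nonempty
    (hWV : ∀ X : Finset (Leaf m), branchSum m W X = branchSum m V X)
    (hV : ArrayMonoUpTo (m + 2) V) (hδ : W (m + 2) (m + 1) ≤ δ)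
    (hsub : UnionBound m V V (V (m + 1) m)) (hEF : Disjoint E F)
    (hEb : ∀ u ∈ E, u 0 = b) (hE : E.Nonempty) (hF : ∀ c, (side c F).Nonempty) :
    branchSum (m + 1) W (E ∪ F) ≤ δ + branchSum (m + 1) V E + branchSum (m + 1) V F := by
  have hE' : side (!b) E = ∅ := side_not_eq_empty_iff.2 hEb
  have hEb' := side_nonempty hEb hE
  rw [branchSum_succ_of_sides_nonempty W (b := b) (by simpa using hEb'.mono subset_union_left)
      (by simpa [hE'] using hF (!b)),
    branchSum_succ_of_forall_head_eq V hEb, branchSum_succ_of_sides_nonempty V (hF b) (hF (!b))]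
  simp only [side_union, hE', empty_union, hWV]
  linarith [hsub _ _ (disjoint_side hEF) hEb' (hF b), branchSum_le_subtreeParams hV (side b E),
    hV (m + 1) (m + 2) m (m + 1) (by omega) (by omega) (by omega) le_rfl (by omega)]

lemma branchSum_union_le_of_sides_nonempty
    (hWV : ∀ X : Finset (Leaf m), branchSum m W X = branchSum m V X)
    (hV : ArrayMonoUpTo (m + 2) V) (hδ : W (m + 2) (m + 1) ≤ δ)
    (hsub : UnionBound m V V (V (m + 1) m)) (hEF : Disjoint E F)
    (hE : ∀ c, (side c E).Nonempty) (hF : ∀ c, (side c F).Nonempty) :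
    branchSum (m + 1) W (E ∪ F) ≤ δ + branchSum (m + 1) V E + branchSum (m + 1) V F := by
  rw [branchSum_succ_of_sides_nonempty W (b := false)
      (by simpa using (hE false).mono subset_union_left)
      (by simpa using (hE true).mono subset_union_left),
    branchSum_succ_of_sides_nonempty V (hE false) (hE true),
    branchSum_succ_of_sides_nonempty V (hF false) (hF true)]
  simp only [side_union, hWV, Bool.not_false]
  linarith [hsub _ _ (disjoint_side hEF) (hE false) (hF false),
    hsub _ _ (disjoint_side hEF) (hE true) (hF true),
    hV (m + 1) (m + 2) m (m + 1) (by omega) (by omega) (by omega) le_rfl (by omega)]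

end UnionBound

theorem unionBound : ∀ {m : ℕ} {V W : ℕ → ℕ → ℝ} {δ : ℝ},
    ArrayMonoUpTo (m + 1) V → ArrayMonoUpTo (m + 1) W →
    (∀ k l, l < k → k ≤ m → V k l = W k l) → (∀ l ≤ m, V (m + 1) l ≤ W (m + 1) l) →
    (∀ l ≤ m, W (m + 1) l ≤ δ) → UnionBound m V W δ
  | 0, _, _, _, _, _, _, _, _ => fun E F hEF hE hF => by
    rw [hE.eq_univ, hF.eq_univ, disjoint_self, bot_eq_empty] at hEF
    exact absurd hEF univ_nonempty.ne_empty
  | m + 1, V, W, δ, hV, hW, hVW, hle, hδ => by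
    have hWV (X : Finset (Leaf m)) : branchSum m W X = branchSum m V X :=
      branchSum_congr (fun k l h₁ h₂ => (hVW k l h₁ h₂).symm) X
    have hsub : UnionBound m V V (V (m + 1) m) :=
      unionBound (hV.mono (by omega)) (hV.mono (by omega)) (fun _ _ _ _ => rfl) (fun _ _ => le_rfl)
        (fun l hl => hV _ _ _ _ (by omega) (by omega) le_rfl (by omega) hl)
    have hlift : UnionBound m (subtreeParams m V) (subtreeParams m W) δ :=
      unionBound hV.subtreeParams hW.subtreeParams
        (fun k l h₁ h₂ => by simp [subtreeParams, show k ≠ m + 1 by omega, hVW k l h₁ (by omega)])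
        (fun l hl => by simpa [subtreeParams] using hle l (by omega))
        (fun l hl => by simpa [subtreeParams] using hδ l (by omega))
    have hδ : W (m + 2) (m + 1) ≤ δ := hδ _ le_rfl
    have one_sided : ∀ E F : Finset (Leaf (m + 1)), Disjoint E F → E.Nonempty → F.Nonempty →
        (∃ b, ∀ u ∈ E, u 0 = b) →
        branchSum (m + 1) W (E ∪ F) ≤ δ + branchSum (m + 1) V E + branchSum (m + 1) V F := by
      rintro E F hEF hE hF ⟨b, hEb⟩
      rcases forall_head_eq_or_sides_nonempty F with ⟨c, hFc⟩ | hF'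
      · rcases Bool.eq_or_eq_not c b with rfl | rfl
        · have hEFc : ∀ u ∈ E ∪ F, u 0 = c := by simpa [or_imp, forall_and] using ⟨hEb, hFc⟩
          rw [branchSum_succ_of_forall_head_eq W hEFc, branchSum_succ_of_forall_head_eq V hEb,
            branchSum_succ_of_forall_head_eq V hFc, side_union]
          exact hlift _ _ (disjoint_side hEF) (side_nonempty hEb hE) (side_nonempty hFc hF)
        · exact branchSum_union_le_of_opposite_sides hWV hV hδ hEb hFc hE hF
      · exact branchSum_union_le_of_forall_head_eq_of_sides_nonempty hWV hV hδ hsub hEF hEb hE hF'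
    intro E F hEF hE hF
    rcases forall_head_eq_or_sides_nonempty E with hE' | hE'
    · exact one_sided E F hEF hE hF hE'
    rcases forall_head_eq_or_sides_nonempty F with hF' | hF'
    · rw [union_comm]
      linarith [one_sided F E hEF.symm hF hE hF']
    · exact branchSum_union_le_of_sides_nonempty hWV hV hδ hsub hEF hE' hF'

lemma unionBound_subtreeParams {m : ℕ} {G : ℕ → ℕ → ℝ} (hG : ArrayMonoUpTo (m + 2) G) :
    UnionBound m G (subtreeParams m G) (G (m + 2) (m + 1)) :=
  unionBound (hG.mono (by omega)) hG.subtreeParams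
    (fun k l _ hk => by simp [subtreeParams, show k ≠ m + 1 by omega])
    (fun l hl => by
      simpa [subtreeParams] using hG _ _ l l (by omega) (by omega) (by omega) le_rfl le_rfl)
    (fun l hl => by
      simpa [subtreeParams] using hG _ _ l _ (by omega) (by omega) le_rfl le_rfl (by omega))

lemma MoreClustered.nonempty_iff {n : ℕ} {A B : Finset (Leaf n)} (h : MoreClustered A B) :
    A.Nonempty ↔ B.Nonempty := by
  obtain ⟨σ, hσ, -⟩ := h
  refine ⟨fun ⟨a, ha⟩ => ⟨σ a, hσ.mapsTo ha⟩, fun ⟨v, hv⟩ => ?_⟩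
  obtain ⟨a, ha, -⟩ := hσ.surjOn hv
  exact ⟨a, ha⟩

lemma EquivClustered.moreClustered {n : ℕ} {A B : Finset (Leaf n)} (h : EquivClustered A B) :
    MoreClustered A B :=
  let ⟨σ, hσ, hmeet⟩ := h
  ⟨σ, hσ, fun u hu v hv => (hmeet u hu v hv).ge⟩

lemma EquivClustered.symm {n : ℕ} {A B : Finset (Leaf n)} (h : EquivClustered A B) :
    EquivClustered B A := by
  obtain ⟨σ, hσ, hmeet⟩ := h
  have hinv := hσ.invOn_invFunOn
  have hτ := hσ.symm hinv.symm
  refine ⟨_, hτ, fun u hu v hv => ?_⟩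
  rw [← hmeet _ (hτ.mapsTo hu) _ (hτ.mapsTo hv), hinv.2 hu, hinv.2 hv]

section Descend

variable {m : ℕ} {A B : Finset (Leaf (m + 1))} {σ : Leaf (m + 1) → Leaf (m + 1)}

lemma head_eq_of_map_head_eq (hmeet : ∀ u ∈ A, ∀ v ∈ A, meetAge u v ≤ meetAge (σ u) (σ v))
    {u v : Leaf (m + 1)} (hu : u ∈ A) (hv : v ∈ A) (h : σ u 0 = σ v 0) : u 0 = v 0 :=
  meetAge_le_iff_head_eq.1 ((hmeet u hu v hv).trans (meetAge_le_iff_head_eq.2 h))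

lemma moreClustered_side_filter (hσ : Set.BijOn σ A B)
    (hmeet : ∀ u ∈ A, ∀ v ∈ A, meetAge u v ≤ meetAge (σ u) (σ v)) {b c : Bool}
    (hbc : ∀ u ∈ A, σ u 0 = c → u 0 = b) :
    MoreClustered (side b (A.filter fun u => σ u 0 = c)) (side c B) := by
  have cons_tail {u : Leaf (m + 1)} {a : Bool} (h : u 0 = a) : Fin.cons a (Fin.tail u) = u := by
    rw [← h, Fin.cons_self_tail]
  refine ⟨fun x => Fin.tail (σ (Fin.cons b x)), ⟨fun x hx => ?_, fun x hx y hy hxy => ?_,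
    fun y hy => ?_⟩, fun x hx y hy => ?_⟩
  · rw [mem_coe, mem_side, mem_filter] at hx
    rw [mem_coe, mem_side, cons_tail hx.2]
    exact hσ.mapsTo hx.1
  · rw [mem_coe, mem_side, mem_filter] at hx hy
    have := congrArg (Fin.cons (α := fun _ => Bool) c) hxy
    simp only [cons_tail hx.2, cons_tail hy.2] at this
    exact Fin.cons_right_injective (α := fun _ => Bool) b (hσ.injOn hx.1 hy.1 this)
  · rw [mem_coe, mem_side] at hy
    obtain ⟨u, hu, hσu⟩ := hσ.surjOn hy
    have hub := hbc u hu (by rw [hσu, Fin.cons_zero])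
    refine ⟨Fin.tail u, ?_, ?_⟩
    · rw [mem_coe, mem_side, mem_filter, cons_tail hub, hσu, Fin.cons_zero]
      exact ⟨hu, rfl⟩
    · simp only [cons_tail hub, hσu, Fin.tail_cons]
  · rw [mem_side, mem_filter] at hx hy
    rw [← meetAge_cons b, ← meetAge_of_head_eq (hx.2.trans hy.2.symm)]
    exact hmeet _ hx.1 _ hy.1

lemma moreClustered_side (hσ : Set.BijOn σ A B)
    (hmeet : ∀ u ∈ A, ∀ v ∈ A, meetAge u v ≤ meetAge (σ u) (σ v)) {b c : Bool}
    (hbc : ∀ u ∈ A, σ u 0 = c ↔ u 0 = b) : MoreClustered (side b A) (side c B) := by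
  have h := moreClustered_side_filter hσ hmeet fun u hu => (hbc u hu).1
  rwa [side_filter, filter_true_of_mem fun x hx => (hbc _ (mem_side.1 hx)).2 (Fin.cons_zero _ _)]
    at h

end Descend

section Monotone

variable {m : ℕ} {G : ℕ → ℕ → ℝ} {A B : Finset (Leaf (m + 1))} {σ : Leaf (m + 1) → Leaf (m + 1)}

lemma branchSum_le_of_forall_head_eq_right (hσ : Set.BijOn σ A B)
    (hmeet : ∀ u ∈ A, ∀ v ∈ A, meetAge u v ≤ meetAge (σ u) (σ v)) {c : Bool}
    (hBc : ∀ v ∈ B, v 0 = c)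
    (ih : ∀ X Y : Finset (Leaf m), MoreClustered X Y →
      branchSum m (subtreeParams m G) X ≤ branchSum m (subtreeParams m G) Y) :
    branchSum (m + 1) G A ≤ branchSum (m + 1) G B := by
  obtain ⟨b, hAb⟩ : ∃ b, ∀ u ∈ A, u 0 = b := by
    refine (forall_head_eq_or_sides_nonempty A).resolve_right fun hA => ?_
    obtain ⟨x, hx⟩ := hA false
    obtain ⟨y, hy⟩ := hA true
    rw [mem_side] at hx hy
    simpa using head_eq_of_map_head_eq hmeet hx hy
      ((hBc _ (hσ.mapsTo hx)).trans (hBc _ (hσ.mapsTo hy)).symm)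
  rw [branchSum_succ_of_forall_head_eq G hAb, branchSum_succ_of_forall_head_eq G hBc]
  exact ih _ _ (moreClustered_side hσ hmeet fun u hu =>
    iff_of_true (hBc _ (hσ.mapsTo hu)) (hAb u hu))

lemma branchSum_le_of_forall_head_eq_of_sides_nonempty (hσ : Set.BijOn σ A B)
    (hmeet : ∀ u ∈ A, ∀ v ∈ A, meetAge u v ≤ meetAge (σ u) (σ v)) {b : Bool}
    (hAb : ∀ u ∈ A, u 0 = b) (hB : ∀ c, (side c B).Nonempty)
    (hU : UnionBound m G (subtreeParams m G) (G (m + 2) (m + 1)))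
    (ih : ∀ X Y : Finset (Leaf m), MoreClustered X Y → branchSum m G X ≤ branchSum m G Y) :
    branchSum (m + 1) G A ≤ branchSum (m + 1) G B := by
  set X : Bool → Finset (Leaf m) := fun c => side b (A.filter fun u => σ u 0 = c)
  have hX (c : Bool) : MoreClustered (X c) (side c B) :=
    moreClustered_side_filter hσ hmeet fun u hu _ => hAb u hu
  have hunion : side b A = X false ∪ X true := by
    ext x
    simp only [X, mem_union, mem_side, mem_filter]
    cases σ (Fin.cons b x) 0 <;> simp
  have hdisj : Disjoint (X false) (X true) :=
    disjoint_side (disjoint_filter.2 fun u _ h₁ h₂ => by simp_all)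
  rw [branchSum_succ_of_forall_head_eq G hAb, hunion,
    branchSum_succ_of_sides_nonempty G (hB false) (hB true), Bool.not_false]
  linarith [hU _ _ hdisj ((hX false).nonempty_iff.2 (hB false))
    ((hX true).nonempty_iff.2 (hB true)), ih _ _ (hX false), ih _ _ (hX true)]

lemma branchSum_le_of_sides_nonempty (hσ : Set.BijOn σ A B)
    (hmeet : ∀ u ∈ A, ∀ v ∈ A, meetAge u v ≤ meetAge (σ u) (σ v))
    (hA : ∀ b, (side b A).Nonempty) (hB : ∀ c, (side c B).Nonempty)
    (ih : ∀ X Y : Finset (Leaf m), MoreClustered X Y → branchSum m G X ≤ branchSum m G Y) :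
    branchSum (m + 1) G A ≤ branchSum (m + 1) G B := by
  obtain ⟨x, hx⟩ := hA false
  obtain ⟨y, hy⟩ := hA true
  rw [mem_side] at hx hy
  set c := σ (Fin.cons false x) 0
  have hy' : σ (Fin.cons true y) 0 = !c :=
    Bool.eq_not_iff.2 fun h => by simpa using head_eq_of_map_head_eq hmeet hy hx h
  have hc (u) (hu : u ∈ A) : σ u 0 = c ↔ u 0 = false := by
    refine ⟨fun h => by simpa using head_eq_of_map_head_eq hmeet hu hx h, fun h => ?_⟩
    by_contra h'
    simpa [h] using head_eq_of_map_head_eq hmeet hu hy ((Bool.eq_not_iff.2 h').trans hy'.symm)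
  have hc' (u) (hu : u ∈ A) : σ u 0 = !c ↔ u 0 = true := by
    rw [Bool.eq_not_iff, ne_eq, hc u hu, Bool.not_eq_false]
  rw [branchSum_succ_of_sides_nonempty G (hA false) (hA true),
    branchSum_succ_of_sides_nonempty G (b := c) (hB c) (hB (!c)), Bool.not_false]
  linarith [ih _ _ (moreClustered_side hσ hmeet hc), ih _ _ (moreClustered_side hσ hmeet hc')]

end Monotone

theorem branchSum_le_of_moreClustered : ∀ {m : ℕ} {G : ℕ → ℕ → ℝ}, ArrayMonoUpTo (m + 1) G →
    ∀ {A B : Finset (Leaf m)}, MoreClustered A B → branchSum m G A ≤ branchSum m G B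
  | 0, _, _, A, _, hAB => by
    rcases A.eq_empty_or_nonempty with rfl | hA
    · rw [not_nonempty_iff_eq_empty.1 (mt hAB.nonempty_iff.2 not_nonempty_empty)]
    · rw [hA.eq_univ, (hAB.nonempty_iff.1 hA).eq_univ]
  | m + 1, G, hG, A, B, ⟨σ, hσ, hmeet⟩ => by
    have ih {G'} (hG' : ArrayMonoUpTo (m + 1) G') (X Y : Finset (Leaf m)) (h : MoreClustered X Y) :
        branchSum m G' X ≤ branchSum m G' Y :=
      branchSum_le_of_moreClustered hG' h
    rcases forall_head_eq_or_sides_nonempty B with ⟨c, hBc⟩ | hB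
    · exact branchSum_le_of_forall_head_eq_right hσ hmeet hBc (ih hG.subtreeParams)
    rcases forall_head_eq_or_sides_nonempty A with ⟨b, hAb⟩ | hA
    · exact branchSum_le_of_forall_head_eq_of_sides_nonempty hσ hmeet hAb hB (unionBound_subtreeParams hG)
        (ih (hG.mono (by omega)))
    · exact branchSum_le_of_sides_nonempty hσ hmeet hA hB (ih (hG.mono (by omega)))

section Clustering

variable {n : ℕ} {H : ℕ → ℕ → ℝ} {h : ℝ}

lemma soPhi_le_of_moreClustered (hH : ArrayMonoUpTo (n + 1) H) {A B : Finset (Leaf n)}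
    (hAB : MoreClustered A B) : soPhi n H h A ≤ soPhi n H h B := by
  rcases A.eq_empty_or_nonempty with rfl | hA
  · rw [not_nonempty_iff_eq_empty.1 (mt hAB.nonempty_iff.2 not_nonempty_empty)]
  rw [soPhi_of_nonempty hA, soPhi_of_nonempty (hAB.nonempty_iff.1 hA)]
  linarith [branchSum_le_of_moreClustered hH hAB]

lemma soPhi_union_le (hH : ArrayMonoUpTo (n + 1) H) (hh : H (n + 1) n ≤ h)
    {A B : Finset (Leaf n)} (hAB : Disjoint A B) :
    soPhi n H h (A ∪ B) ≤ soPhi n H h A + soPhi n H h B := by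
  rcases A.eq_empty_or_nonempty with rfl | hA
  · simp [soPhi]
  rcases B.eq_empty_or_nonempty with rfl | hB
  · simp [soPhi]
  rw [soPhi_of_nonempty (hA.mono subset_union_left), soPhi_of_nonempty hA, soPhi_of_nonempty hB]
  linarith [unionBound hH hH (fun _ _ _ _ => rfl) (fun _ _ => le_rfl)
    (fun l hl => (hH _ _ l n (by omega) (by omega) le_rfl le_rfl hl).trans hh) A B hAB hA hB]

end Clustering

theorem stmt11_general (n : ℕ) (H : ℕ → ℕ → ℝ) (h : ℝ)
    (hmono : ∀ k k' l l' : ℕ, l < k → l' < k' → k ≤ k' → k' ≤ n + 1 → l ≤ l' →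
      H k l ≤ H k' l')
    (hh : H (n + 1) n ≤ h) :
    IsMonotoneClusteringFn (soPhi n H h) := by
  have hmon (A B : Finset (Leaf n)) (hAB : MoreClustered A B) : soPhi n H h A ≤ soPhi n H h B :=
    soPhi_le_of_moreClustered hmono hAB
  refine ⟨⟨if_pos rfl, fun A B hAB => ?_⟩, hmon, fun A B hAB => soPhi_union_le hmono hh hAB⟩
  exact (hmon A B hAB.moreClustered).antisymm (hmon B A hAB.symm.moreClustered)

/-- Proposition 1.17: if `(h_{k,ℓ})_{0 ≤ ℓ < k ≤ n+1}` is a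
non-decreasing triangular array and `h ≥ h_{n+1,n}`, then the second order branching
clustering function with parameters `(h_{k,ℓ})` and `h` is a monotone clustering
function. -/
theorem stmt11 (n : ℕ) (hn : 1 ≤ n) (H : ℕ → ℕ → ℝ) (h : ℝ)
    (hmono : ∀ k k' l l' : ℕ, l < k → l' < k' → k ≤ k' → k' ≤ n + 1 → l ≤ l' →
      H k l ≤ H k' l')
    (hh : H (n + 1) n ≤ h) :
    IsMonotoneClusteringFn (soPhi n H h) :=
  stmt11_general n H h hmono hh

end PWC
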